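/- Let L₁ be a symmetric positive definite matrix, P > 0 satisfy AP + PA^T + αP − 2BB^T < 0, and c₁ ≥ 1/λ_min(L₁). Then Z + αL₁ ⊗ P^{-1} < 0, where Z = L₁ ⊗ (P^{-1}A + A^T P^{-1}) − 2c₁ L₁² ⊗ P^{-1}BB^T P^{-1}. -/

import Mathlib

open Matrix
open scoped Kronecker MatrixOrder ComplexOrder

/-!
Writing `R = P⁻¹BBᵀP⁻¹` and `Q = P⁻¹(-(AP + PAᵀ + αP − 2BBᵀ))P⁻¹`, one has the identity
`-(Z + αL₁ ⊗ P⁻¹) = L₁ ⊗ Q + 2(c₁L₁² − L₁) ⊗ R`.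
Here `Q > 0` is a congruence of the LMI, `R ≥ 0`, and `c₁L₁² − L₁ ≥ 0` because every eigenvalue
`λ` of `L₁` satisfies `c₁λ ≥ c₁λ_min ≥ 1`. Kronecker products of positive (semi)definite
matrices are positive (semi)definite, so the sum is positive definite.
-/

section Spectral

variable {m 𝕜 : Type*} [Fintype m] [DecidableEq m] [RCLike 𝕜]

theorem Matrix.IsHermitian.posSemidef_smul_mul_self_sub {L : Matrix m m 𝕜} (hL : L.IsHermitian)
    {c : ℝ} (h : ∀ i, hL.eigenvalues i ≤ c * hL.eigenvalues i ^ 2) :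
    (c • (L * L) - L).PosSemidef := by
  have hcfc : cfc (fun x : ℝ => c * x ^ 2 - x) L = c • (L * L) - L := by
    rw [cfc_sub _ _ L, cfc_const_mul _ _ L, cfc_pow _ _ L, cfc_id' ℝ L, sq]
  rw [← nonneg_iff_posSemidef, ← hcfc]
  refine cfc_nonneg fun x hx => ?_
  obtain ⟨i, rfl⟩ := hL.spectrum_real_eq_range_eigenvalues ▸ hx
  linarith [h i]

theorem Matrix.PosDef.one_le_mul_eigenvalues {L : Matrix m m 𝕜} (hL : L.PosDef) {c : ℝ}
    (hc : 1 / ⨅ i, hL.1.eigenvalues i ≤ c) (i : m) : 1 ≤ c * hL.1.eigenvalues i := by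
  have : Nonempty m := ⟨i⟩
  have hmin_pos : 0 < ⨅ j, hL.1.eigenvalues j := by
    obtain ⟨j, hj⟩ := Finite.exists_min hL.1.eigenvalues
    exact (hL.eigenvalues_pos j).trans_le (le_ciInf hj)
  have hmin_le : ⨅ j, hL.1.eigenvalues j ≤ hL.1.eigenvalues i :=
    ciInf_le (Set.finite_range _).bddBelow i
  calc 1 = (1 / ⨅ j, hL.1.eigenvalues j) * ⨅ j, hL.1.eigenvalues j := by field_simp
    _ ≤ c * hL.1.eigenvalues i := by
      gcongr
      exact (one_div_pos.mpr hmin_pos).le.trans hc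

theorem Matrix.PosDef.posSemidef_smul_mul_self_sub {L : Matrix m m 𝕜} (hL : L.PosDef) {c : ℝ}
    (hc : 1 / ⨅ i, hL.1.eigenvalues i ≤ c) : (c • (L * L) - L).PosSemidef :=
  hL.1.posSemidef_smul_mul_self_sub fun i => by
    nlinarith [hL.eigenvalues_pos i, hL.one_le_mul_eigenvalues hc i]

end Spectral

section Congruence

variable {n k : Type*} [Fintype n] [DecidableEq n] [Fintype k]

theorem Matrix.PosDef.inv_mul_mul_inv {𝕜 : Type*} [RCLike 𝕜] {M P : Matrix n n 𝕜}
    (hM : M.PosDef) (hP : P.PosDef) : (P⁻¹ * M * P⁻¹).PosDef := by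
  simpa only [hP.inv.1.eq] using
    hM.conjTranspose_mul_mul_same (mulVec_injective_iff_isUnit.mpr hP.inv.isUnit)

theorem Matrix.posSemidef_inv_mul_mul_transpose_mul_inv (B : Matrix n k ℝ) {P : Matrix n n ℝ}
    (hP : P.PosDef) : (P⁻¹ * B * Bᵀ * P⁻¹).PosSemidef := by
  have h := posSemidef_self_mul_conjTranspose (P⁻¹ * B)
  rwa [conjTranspose_mul, hP.inv.1.eq, conjTranspose_eq_transpose_of_trivial,
    ← Matrix.mul_assoc] at h

theorem Matrix.inv_mul_lyapunov_mul_inv {K : Type*} [Field K] (A : Matrix n n K)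
    (B : Matrix n k K) (α : K) {P : Matrix n n K} (hP : IsUnit P) :
    P⁻¹ * (A * P + P * Aᵀ + α • P - (2 : K) • (B * Bᵀ)) * P⁻¹ =
      P⁻¹ * A + Aᵀ * P⁻¹ + α • P⁻¹ - (2 : K) • (P⁻¹ * B * Bᵀ * P⁻¹) := by
  have hPdet : IsUnit P.det := (isUnit_iff_isUnit_det P).mp hP
  simp only [Matrix.mul_add, Matrix.add_mul, Matrix.mul_sub, Matrix.sub_mul, Matrix.mul_smul,
    Matrix.smul_mul, Matrix.mul_assoc, mul_nonsing_inv P hPdet, Matrix.mul_one]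
  simp only [← Matrix.mul_assoc P⁻¹ P, nonsing_inv_mul P hPdet, Matrix.one_mul]

end Congruence

theorem kron_Z_negDef_general (N n p : ℕ)
    (L1 : Matrix (Fin N) (Fin N) ℝ) (hL1 : L1.PosDef)
    (A : Matrix (Fin n) (Fin n) ℝ) (B : Matrix (Fin n) (Fin p) ℝ)
    (P : Matrix (Fin n) (Fin n) ℝ) (hP : P.PosDef)
    (α c1 : ℝ)
    (hc1 : c1 ≥ 1 / ⨅ i, hL1.1.eigenvalues i)
    (hLMI : (-(A * P + P * Aᵀ + α • P - (2 : ℝ) • (B * Bᵀ))).PosDef)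
    (Z : Matrix (Fin N × Fin n) (Fin N × Fin n) ℝ)
    (hZ : Z = Matrix.kroneckerMap (· * ·) L1 (P⁻¹ * A + Aᵀ * P⁻¹) -
        (2 * c1) • Matrix.kroneckerMap (· * ·) (L1 * L1) (P⁻¹ * B * Bᵀ * P⁻¹)) :
    (-(Z + α • Matrix.kroneckerMap (· * ·) L1 P⁻¹)).PosDef := by
  set R := P⁻¹ * B * Bᵀ * P⁻¹
  set Q := P⁻¹ * (-(A * P + P * Aᵀ + α • P - (2 : ℝ) • (B * Bᵀ))) * P⁻¹
  have hQ : Q = -(P⁻¹ * A + Aᵀ * P⁻¹) - α • P⁻¹ + (2 : ℝ) • R := by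
    simp only [Q, Matrix.mul_neg, Matrix.neg_mul, inv_mul_lyapunov_mul_inv A B α hP.isUnit]
    abel
  have hdecomp : -(Z + α • L1 ⊗ₖ P⁻¹) = L1 ⊗ₖ Q + ((2 : ℝ) • (c1 • (L1 * L1) - L1)) ⊗ₖ R := by
    rw [hZ, hQ]
    ext ⟨i, k⟩ ⟨j, l⟩
    simp only [kroneckerMap_apply, Matrix.neg_apply, Matrix.add_apply, Matrix.sub_apply,
      Matrix.smul_apply, smul_eq_mul]
    ring
  change (-(Z + α • L1 ⊗ₖ P⁻¹)).PosDef
  rw [hdecomp]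
  exact (hL1.kronecker (hLMI.inv_mul_mul_inv hP)).add_posSemidef
    (((hL1.posSemidef_smul_mul_self_sub hc1).smul zero_le_two).kronecker
      (posSemidef_inv_mul_mul_transpose_mul_inv B hP))

/-- If `L₁ > 0` with smallest eigenvalue `λ_min(L₁)`, `P > 0` satisfies
`AP + PAᵀ + αP − 2BBᵀ < 0`, and `c₁ ≥ 1/λ_min(L₁)`, then
`Z + αL₁ ⊗ P⁻¹ < 0`, where `Z = L₁ ⊗ (P⁻¹A + AᵀP⁻¹) − 2c₁L₁² ⊗ P⁻¹BBᵀP⁻¹`. -/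
theorem kron_Z_negDef (N n p : ℕ) (hN : 0 < N)
    (L1 : Matrix (Fin N) (Fin N) ℝ) (hL1 : L1.PosDef)
    (A : Matrix (Fin n) (Fin n) ℝ) (B : Matrix (Fin n) (Fin p) ℝ)
    (P : Matrix (Fin n) (Fin n) ℝ) (hP : P.PosDef)
    (α c1 : ℝ) (hα : 0 < α)
    (hc1 : c1 ≥ 1 / ⨅ i, hL1.1.eigenvalues i)
    (hLMI : (-(A * P + P * Aᵀ + α • P - (2 : ℝ) • (B * Bᵀ))).PosDef)
    (Z : Matrix (Fin N × Fin n) (Fin N × Fin n) ℝ)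
    (hZ : Z = Matrix.kroneckerMap (· * ·) L1 (P⁻¹ * A + Aᵀ * P⁻¹) -
        (2 * c1) • Matrix.kroneckerMap (· * ·) (L1 * L1) (P⁻¹ * B * Bᵀ * P⁻¹)) :
    (-(Z + α • Matrix.kroneckerMap (· * ·) L1 P⁻¹)).PosDef :=
  kron_Z_negDef_general N n p L1 hL1 A B P hP α c1 hc1 hLMI Z hZ
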